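/- Let M be a compact metric space whose covering numbers satisfy N(M,d,ε) ≤ a·ε^{−m} for all 0 < ε < δ. Let F be the set of functions f : M → ℝ that are 1-Lipschitz with 0 ≤ f ≤ K. Then there is a constant c > 0 such that for all 0 < ε < δ, the covering number of F in the uniform norm satisfies N(F, ‖·‖_∞, ε) ≤ exp(c/ε^m). -/

import Mathlib

/-!
At each scale, a uniform `2ε`-net of the Lipschitz ball is refined to an `ε`-net by recording,
at every point of an `ε/2`-net of `M`, the value of `f` rounded down to the grid `(ε/2)ℤ`.
Since `f` is already within `2ε` of the coarse net element, this leaves a bounded number of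
choices per point, so the net size is multiplied by `exp (O(N(M, ε/2))) = exp (O(ε^{-m}))`.
Descending dyadically from scale `δ`, these exponents form a geometric series dominated by its
last term, which gives `exp (c / ε^m)`.
-/

open Finset

theorem Int.floor_mem_Icc_of_abs_le {t : ℝ} {D : ℕ} (ht : |t| ≤ D) :
    ⌊t⌋ ∈ Icc (-(D : ℤ)) D := by
  rw [abs_le] at ht
  refine mem_Icc.2 ⟨Int.le_floor.2 (by push_cast; exact ht.1), ?_⟩
  exact_mod_cast (Int.floor_le t).trans ht.2

theorem forall_of_dyadic_descent {P : ℝ → Prop} {δ : ℝ} (hδ : 0 < δ)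
    (base : ∀ ε, δ / 2 ≤ ε → ε < δ → P ε)
    (step : ∀ ε, 0 < ε → 2 * ε < δ → P (2 * ε) → P ε) :
    ∀ ε, 0 < ε → ε < δ → P ε := by
  have scale : ∀ k : ℕ, ∀ ε, δ ≤ 2 ^ (k + 1) * ε → ε < δ → P ε := by
    intro k
    induction k with
    | zero => exact fun ε hε hεδ ↦ base ε (by norm_num at hε; linarith) hεδ
    | succ k ih =>
      intro ε hε hεδ
      by_cases hhalf : δ / 2 ≤ ε
      · exact base ε hhalf hεδ
      have hpos : 0 < ε := pos_of_mul_pos_right (hδ.trans_le hε) (by positivity)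
      exact step ε hpos (by linarith) (ih _ (by rw [← mul_assoc, ← pow_succ]; exact hε)
        (by linarith))
  intro ε hε hεδ
  obtain ⟨k, hk⟩ := pow_unbounded_of_one_lt (δ / ε) one_lt_two
  refine scale k ε ?_ hεδ
  rw [div_lt_iff₀ hε] at hk
  calc δ ≤ 2 ^ k * ε := hk.le
    _ ≤ 2 ^ (k + 1) * ε := by gcongr <;> norm_num

theorem pow_le_exp_mul_log {L A : ℝ} (hL : 1 ≤ L) {n : ℕ} (hn : (n : ℝ) ≤ A) :
    L ^ n ≤ Real.exp (A * Real.log L) := by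
  rw [← Real.exp_log (by positivity : 0 < L ^ n), Real.log_pow]
  gcongr
  exact Real.log_nonneg hL

theorem two_mul_div_two_mul_pow_le {κ ε : ℝ} (hκ : 0 ≤ κ) (hε : 0 < ε) {m : ℕ} (hm : m ≠ 0) :
    2 * κ / (2 * ε) ^ m ≤ κ / ε ^ m := by
  rw [mul_pow, ← div_div]
  gcongr
  rw [div_le_iff₀ (by positivity)]
  nlinarith [le_self_pow₀ (one_le_two : (1 : ℝ) ≤ 2) hm]

section

variable {M : Type*}

def IsUniformNet (F T : Set (M → ℝ)) (ε : ℝ) : Prop :=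
  ∀ f ∈ F, ∃ g ∈ T, ∀ x, |f x - g x| ≤ ε

theorem isUniformNet_singleton_zero {F : Set (M → ℝ)} {K : ℝ}
    (hF : ∀ f ∈ F, ∀ x, f x ∈ Set.Icc 0 K) : IsUniformNet F {0} K := fun f hf ↦
  ⟨0, rfl, fun x ↦ by simpa [abs_of_nonneg (hF f hf x).1] using (hF f hf x).2⟩

variable [PseudoMetricSpace M]

theorem IsUniformNet.exists_refine {F : Set (M → ℝ)} {L : NNReal}
    (hF : ∀ f ∈ F, LipschitzWith L f) {T' : Finset (M → ℝ)} {R : ℝ}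
    (hT' : IsUniformNet F T' R) {s : Finset M} {r : ℝ} (hs : ∀ x, ∃ y ∈ s, dist x y ≤ r)
    {h : ℝ} (hh : 0 < h) {D : ℕ} (hR : R ≤ D * h) :
    ∃ T : Finset (M → ℝ), #T ≤ #T' * (2 * D + 1) ^ #s ∧ IsUniformNet F T (L * r + h) := by
  classical
  have hs' : ∀ x : M, ∃ y : s, dist x y ≤ r := fun x ↦ (hs x).elim fun y hy ↦ ⟨⟨y, hy.1⟩, hy.2⟩
  choose p hp using hs'
  let decode : (M → ℝ) × (s → ℤ) → M → ℝ := fun gφ x ↦ gφ.1 (p x) + gφ.2 (p x) * h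
  refine ⟨(T' ×ˢ Fintype.piFinset fun _ : s ↦ Icc (-(D : ℤ)) D).image decode, ?_, ?_⟩
  · refine card_image_le.trans ?_
    rw [card_product, Fintype.card_piFinset, prod_const, Int.card_Icc, card_univ,
      Fintype.card_coe]
    gcongr
    omega
  intro f hf
  obtain ⟨g, hg, hfg⟩ := hT' f hf
  let φ : s → ℤ := fun y ↦ ⌊(f y - g y) / h⌋
  have hφ : φ ∈ Fintype.piFinset fun _ : s ↦ Icc (-(D : ℤ)) D := by
    refine Fintype.mem_piFinset.2 fun y ↦ Int.floor_mem_Icc_of_abs_le ?_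
    rw [abs_div, abs_of_pos hh, div_le_iff₀ hh]
    exact (hfg y).trans hR
  refine ⟨decode (g, φ), mem_image_of_mem _ (mem_product.2 ⟨hg, hφ⟩), fun x ↦ ?_⟩
  have hnear : |f x - f (p x)| ≤ L * r := by
    rw [← Real.dist_eq]
    exact ((hF f hf).dist_le_mul x (p x)).trans (by gcongr; exact hp x)
  have hround : |f (p x) - decode (g, φ) x| ≤ h := by
    have : f (p x) - decode (g, φ) x = Int.fract ((f (p x) - g (p x)) / h) * h := by
      simp only [decode, φ, Int.fract]
      field_simp
      ring
    rw [this, abs_of_nonneg (by have := Int.fract_nonneg ((f (p x) - g (p x)) / h); positivity)]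
    exact mul_le_of_le_one_left hh.le (Int.fract_lt_one _).le
  calc |f x - decode (g, φ) x| ≤ |f x - f (p x)| + |f (p x) - decode (g, φ) x| :=
        abs_sub_le _ _ _
    _ ≤ L * r + h := add_le_add hnear hround

theorem IsUniformNet.exists_refine_card_le_exp {F : Set (M → ℝ)}
    (hF : ∀ f ∈ F, LipschitzWith 1 f) {T' : Finset (M → ℝ)} {R B : ℝ}
    (hT' : IsUniformNet F T' R) (hT'card : (#T' : ℝ) ≤ Real.exp B) {s : Finset M} {a ε : ℝ}
    {m D : ℕ} (hs : ∀ x, ∃ y ∈ s, dist x y ≤ ε / 2) (hscard : (#s : ℝ) ≤ a / (ε / 2) ^ m)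
    (hε : 0 < ε) (hR : R ≤ D * (ε / 2)) :
    ∃ T : Finset (M → ℝ),
      (#T : ℝ) ≤ Real.exp (B + 2 ^ m * a * Real.log (2 * D + 1) / ε ^ m) ∧
      IsUniformNet F T ε := by
  obtain ⟨T, hT, hnet⟩ := hT'.exists_refine hF hs (half_pos hε) hR
  refine ⟨T, ?_, by simpa using hnet⟩
  have hscard' : (#s : ℝ) ≤ 2 ^ m * a / ε ^ m := by
    refine hscard.trans_eq ?_
    rw [div_pow]
    field_simp
  calc (#T : ℝ) ≤ #T' * (2 * D + 1) ^ #s := by exact_mod_cast hT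
    _ ≤ Real.exp B * Real.exp (2 ^ m * a / ε ^ m * Real.log (2 * D + 1)) := by
        gcongr
        exact pow_le_exp_mul_log (by linarith [D.cast_nonneg (α := ℝ)]) hscard'
    _ = _ := by rw [← Real.exp_add, div_mul_eq_mul_div]

end

theorem covering_number_lipschitz_ball_general
    {M : Type*} [MetricSpace M]
    (a δ K : ℝ) (m : ℕ) (ha : 0 < a) (hδ : 0 < δ) (hm : 0 < m)
    (hcov : ∀ ε : ℝ, 0 < ε → ε < δ → ∃ s : Finset M,
      (s.card : ℝ) ≤ a / ε ^ m ∧ ∀ x : M, ∃ y ∈ s, dist x y ≤ ε) :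
    ∃ c : ℝ, 0 < c ∧ ∀ ε : ℝ, 0 < ε → ε < δ →
      ∃ T : Finset (M → ℝ), (T.card : ℝ) ≤ Real.exp (c / ε ^ m) ∧
        ∀ f : M → ℝ, (LipschitzWith 1 f ∧ ∀ x, f x ∈ Set.Icc 0 K) →
          ∃ g ∈ T, ∀ x, |f x - g x| ≤ ε := by
  set F : Set (M → ℝ) := {f | LipschitzWith 1 f ∧ ∀ x, f x ∈ Set.Icc 0 K}
  -- `D ≥ 4K/δ` gives `K ≤ D ε/2` at the top scales `ε ≥ δ/2`, and `D ≥ 4` gives `2ε ≤ D ε/2`.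
  set D : ℕ := ⌈4 * K / δ⌉₊ + 4
  set κ := 2 ^ m * a * Real.log (2 * D + 1)
  have hκ : 0 < κ := by
    have := Real.log_pos (by simp [D]; positivity : (1 : ℝ) < 2 * D + 1)
    positivity
  have hKD : K ≤ D * (δ / 4) := calc
    K = 4 * K / δ * (δ / 4) := by field_simp
    _ ≤ D * (δ / 4) := by gcongr; exact (Nat.le_ceil _).trans (by simp [D])
  refine ⟨2 * κ, by positivity,
    forall_of_dyadic_descent hδ (fun ε hε hεδ ↦ ?_) (fun ε hε h2ε hP ↦ ?_)⟩
  · obtain ⟨s, hscard, hs⟩ := hcov (ε / 2) (by linarith) (by linarith)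
    obtain ⟨T, hT, hnet⟩ := IsUniformNet.exists_refine_card_le_exp (F := F) (T' := {0})
      (fun f hf ↦ hf.1) (by simpa using isUniformNet_singleton_zero fun f hf ↦ hf.2) (B := 0)
      (by simp) hs hscard (by linarith)
      (hKD.trans (mul_le_mul_of_nonneg_left (by linarith) D.cast_nonneg))
    refine ⟨T, hT.trans (Real.exp_le_exp.2 ?_), hnet⟩
    have hεm : 0 < ε ^ m := pow_pos (by linarith) m
    change 0 + κ / ε ^ m ≤ 2 * κ / ε ^ m
    rw [zero_add]
    gcongr
    linarith
  · obtain ⟨T', hT'card, hT'⟩ := hP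
    obtain ⟨s, hscard, hs⟩ := hcov (ε / 2) (by linarith) (by linarith)
    obtain ⟨T, hT, hnet⟩ := IsUniformNet.exists_refine_card_le_exp (F := F) (fun f hf ↦ hf.1)
      hT' hT'card hs hscard hε (D := D) (by nlinarith [show (4 : ℝ) ≤ D by simp [D]])
    refine ⟨T, hT.trans (Real.exp_le_exp.2 ?_), hnet⟩
    calc 2 * κ / (2 * ε) ^ m + κ / ε ^ m ≤ κ / ε ^ m + κ / ε ^ m :=
          add_le_add_left (two_mul_div_two_mul_pow_le hκ.le hε hm.ne') _
      _ = 2 * κ / ε ^ m := by ring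

theorem covering_number_lipschitz_ball
    {M : Type*} [MetricSpace M] [CompactSpace M]
    (a δ K : ℝ) (m : ℕ) (ha : 0 < a) (hδ : 0 < δ) (hK : 0 < K) (hm : 0 < m)
    (hcov : ∀ ε : ℝ, 0 < ε → ε < δ → ∃ s : Finset M,
      (s.card : ℝ) ≤ a / ε ^ m ∧ ∀ x : M, ∃ y ∈ s, dist x y ≤ ε) :
    ∃ c : ℝ, 0 < c ∧ ∀ ε : ℝ, 0 < ε → ε < δ →
      ∃ T : Finset (M → ℝ), (T.card : ℝ) ≤ Real.exp (c / ε ^ m) ∧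
        ∀ f : M → ℝ, (LipschitzWith 1 f ∧ ∀ x, f x ∈ Set.Icc 0 K) →
          ∃ g ∈ T, ∀ x, |f x - g x| ≤ ε :=
  covering_number_lipschitz_ball_general a δ K m ha hδ hm hcov
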